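/- Let K = {(x,y) ∈ [−1,1]² : x ≤ 0, or x > 0 and |y| ≥ e^{−1/x}}, and define f : K → ℝ by f(x,y) = e^{−1/(2x)} if x > 0 and y > 0, and f(x,y) = 0 otherwise. Then f admits a continuous derivative on K (so f ∈ C¹(K)), but f is not Lipschitz continuous on K; in particular, there is no F ∈ C¹(ℝ²) with F|_K = f. -/

import Mathlib

open Set Filter Topology MeasureTheory
open scoped NNReal ENNReal

noncomputable section

/-- `df` is a (not necessarily unique) derivative of `f` on the set `K`:
at every `x ∈ K`, `(f y - f x - ⟪df x, y - x⟫)/‖y - x‖ → 0` as `y → x` within `K`. -/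
def IsDerivOn {d : ℕ} (K : Set (EuclideanSpace ℝ (Fin d)))
    (f : EuclideanSpace ℝ (Fin d) → ℝ)
    (df : EuclideanSpace ℝ (Fin d) → EuclideanSpace ℝ (Fin d)) : Prop :=
  ∀ x ∈ K, Filter.Tendsto
    (fun y => (f y - f x - (inner ℝ (df x) (y - x) : ℝ)) / ‖y - x‖)
    (𝓝[K \ {x}] x) (𝓝 0)

/-- The inward-cusp domain
`K = {(x,y) ∈ [-1,1]² : x ≤ 0, or x > 0 and |y| ≥ e^{-1/x}}`. -/
def cuspSet : Set (EuclideanSpace ℝ (Fin 2)) :=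
  {p | p 0 ∈ Icc (-1:ℝ) 1 ∧ p 1 ∈ Icc (-1:ℝ) 1 ∧
    (p 0 ≤ 0 ∨ (0 < p 0 ∧ Real.exp (-1 / p 0) ≤ |p 1|))}

open Classical in
/-- `f(x,y) = e^{-1/(2x)}` for `x > 0, y > 0`, and `f = 0` elsewhere. -/
def cuspFun : EuclideanSpace ℝ (Fin 2) → ℝ :=
  fun p => if 0 < p 0 ∧ 0 < p 1 then Real.exp (-1 / (2 * p 0)) else 0

/-!
Put `G p = expNegInvGlue (2 p₀)`: a smooth function on `ℝ²` which vanishes, together with its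
derivative, on the half-plane `p₀ ≤ 0`. Then `f` is `G` multiplied by the indicator of the upper
half-plane `p₁ > 0`. Inside `K` the boundary line `p₁ = 0` is met only where `p₀ ≤ 0`, where `G`
and `∇G` vanish, so cutting `G` and `∇G` off by the indicator keeps `f` differentiable at every
point of `K` with continuous derivative `1_{p₁ > 0} ∇G`.

The points `(t, ±e^{-1/t})` of `K` are `2e^{-1/t}` apart while the values of `f` there differ by
`e^{-1/(2t)}`, so the difference quotients of `f` grow like `e^{1/(2t)}` as `t → 0⁺`. A `C¹`
function on `ℝ²` is Lipschitz on the compact square `[-1,1]² ⊇ K`, so it cannot extend `f`.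
-/

section Indicator

variable {X F : Type*} [TopologicalSpace X] [NormedAddCommGroup F] {s : Set X} {f : X → F}
  {x : X}

theorem ContinuousAt.indicator_of_frontier (hf : ContinuousAt f x)
    (hfr : x ∈ frontier s → f x = 0) : ContinuousAt (s.indicator f) x := by
  by_cases hint : x ∈ interior s
  · refine hf.congr ?_
    filter_upwards [mem_interior_iff_mem_nhds.mp hint] with y hy
    exact (indicator_of_mem hy f).symm
  by_cases hcl : x ∈ closure s
  · have hx0 : f x = 0 := hfr ⟨hcl, hint⟩
    have hf0 : Tendsto f (𝓝 x) (𝓝 0) := hx0 ▸ hf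
    rw [ContinuousAt, indicator_apply_eq_zero.mpr fun _ => hx0]
    exact squeeze_zero_norm (fun y => norm_indicator_le_norm_self f y)
      (tendsto_norm_zero.comp hf0)
  · refine continuousAt_const.congr (f := fun _ => (0 : F)) ?_
    filter_upwards [isClosed_closure.isOpen_compl.mem_nhds hcl] with y hy
    exact (indicator_of_notMem (fun h => hy (subset_closure h)) f).symm

end Indicator

section IndicatorFDeriv

variable {𝕜 E F : Type*} [NontriviallyNormedField 𝕜] [NormedAddCommGroup E] [NormedSpace 𝕜 E]
  [NormedAddCommGroup F] [NormedSpace 𝕜 F] {s : Set E} {f : E → F} {f' : E → E →L[𝕜] F} {x : E}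

theorem HasFDerivAt.indicator_of_frontier (hf : HasFDerivAt f (f' x) x)
    (hfr : x ∈ frontier s → f x = 0 ∧ f' x = 0) :
    HasFDerivAt (s.indicator f) (s.indicator f' x) x := by
  by_cases hint : x ∈ interior s
  · rw [indicator_of_mem (interior_subset hint)]
    refine hf.congr_of_eventuallyEq ?_
    filter_upwards [mem_interior_iff_mem_nhds.mp hint] with y hy
    exact indicator_of_mem hy f
  by_cases hcl : x ∈ closure s
  · obtain ⟨hx0, hx0'⟩ := hfr ⟨hcl, hint⟩
    rw [indicator_apply_eq_zero.mpr fun _ => hx0']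
    rw [hx0'] at hf
    refine HasFDerivAt.of_isLittleO (Asymptotics.IsBigO.trans_isLittleO ?_ hf.isLittleO)
    refine Asymptotics.IsBigO.of_bound 1 (Eventually.of_forall fun y => ?_)
    simpa [hx0, indicator_apply_eq_zero.mpr fun _ => hx0] using norm_indicator_le_norm_self f y
  · rw [indicator_of_notMem (fun h => hcl (subset_closure h))]
    refine (hasFDerivAt_const (0 : F) x).congr_of_eventuallyEq ?_
    filter_upwards [isClosed_closure.isOpen_compl.mem_nhds hcl] with y hy
    exact indicator_of_notMem (fun h => hy (subset_closure h)) f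

end IndicatorFDeriv

theorem isDerivOn_of_hasGradientWithinAt {d : ℕ} {K : Set (EuclideanSpace ℝ (Fin d))}
    {f : EuclideanSpace ℝ (Fin d) → ℝ} {df : EuclideanSpace ℝ (Fin d) → EuclideanSpace ℝ (Fin d)}
    (h : ∀ x ∈ K, HasGradientWithinAt f (df x) K x) : IsDerivOn K f df := by
  intro x hx
  refine squeeze_zero_norm (fun y => le_of_eq ?_)
    ((hasGradientWithinAt_iff_tendsto.mp (h x hx)).mono_left (nhdsWithin_mono x sdiff_subset))
  rw [Real.norm_eq_abs, abs_div, abs_norm, div_eq_inv_mul, Real.norm_eq_abs]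

theorem deriv_expNegInvGlue_of_nonpos {t : ℝ} (ht : t ≤ 0) : deriv expNegInvGlue t = 0 := by
  have hzero : EqOn (deriv expNegInvGlue) 0 (Iio 0) := fun s hs =>
    (Filter.eventuallyEq_of_mem (Iio_mem_nhds hs)
      fun r hr => expNegInvGlue.zero_of_nonpos (le_of_lt hr)).deriv_eq.trans (deriv_const s 0)
  exact hzero.closure (expNegInvGlue.contDiff.continuous_deriv le_rfl) continuous_const
    (by rwa [closure_Iio])

local notation "ℝ²" => EuclideanSpace ℝ (Fin 2)

def upperHalfPlane : Set ℝ² := {p | 0 < p 1}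

def cuspGlue (p : ℝ²) : ℝ := expNegInvGlue (2 * p 0)

theorem contDiff_cuspGlue : ContDiff ℝ 1 cuspGlue :=
  expNegInvGlue.contDiff.comp
    (contDiff_const.mul (EuclideanSpace.proj (𝕜 := ℝ) (0 : Fin 2)).contDiff)

theorem cuspFun_eq_indicator : cuspFun = upperHalfPlane.indicator cuspGlue := by
  ext p
  by_cases hp1 : 0 < p 1
  · rw [indicator_of_mem (show p ∈ upperHalfPlane from hp1), cuspFun, cuspGlue]
    by_cases hp0 : 0 < p 0
    · rw [if_pos ⟨hp0, hp1⟩, expNegInvGlue, if_neg (by linarith), neg_div, one_div]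
    · rw [if_neg (fun h => hp0 h.1), expNegInvGlue.zero_of_nonpos (by linarith)]
  · rw [indicator_of_notMem (show p ∉ upperHalfPlane from hp1), cuspFun,
      if_neg (fun h => hp1 h.2)]

theorem hasFDerivAt_cuspGlue_of_nonpos {p : ℝ²} (hp : p 0 ≤ 0) :
    HasFDerivAt cuspGlue (0 : ℝ² →L[ℝ] ℝ) p := by
  have hglue : HasDerivAt expNegInvGlue 0 (2 * p 0) := by
    have hd : deriv expNegInvGlue (2 * p 0) = 0 := deriv_expNegInvGlue_of_nonpos (by linarith)
    exact hd ▸ ((expNegInvGlue.contDiff (n := 1)).differentiable one_ne_zero _).hasDerivAt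
  have h := hglue.comp_hasFDerivAt p
    ((EuclideanSpace.proj (𝕜 := ℝ) (0 : Fin 2)).hasFDerivAt.const_mul (2 : ℝ))
  rw [zero_smul] at h
  exact h

theorem cuspSet_inter_frontier_subset :
    cuspSet ∩ frontier upperHalfPlane ⊆ {p | p 0 ≤ 0} := by
  rintro p ⟨hp, hfr⟩
  have hp1 : 0 = p 1 := frontier_lt_subset_eq continuous_const
    (EuclideanSpace.proj (𝕜 := ℝ) (1 : Fin 2)).continuous hfr
  rcases hp.2.2 with h | ⟨-, h⟩
  · exact h
  · rw [← hp1, abs_zero] at h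
    exact absurd h (not_le.mpr (Real.exp_pos _))

def cuspDf : ℝ² → ℝ² := upperHalfPlane.indicator (gradient cuspGlue)

theorem continuous_gradient_cuspGlue : Continuous (gradient cuspGlue) :=
  (InnerProductSpace.toDual ℝ ℝ²).symm.continuous.comp
    (contDiff_cuspGlue.continuous_fderiv one_ne_zero)

theorem gradient_cuspGlue_of_nonpos {p : ℝ²} (hp : p 0 ≤ 0) : gradient cuspGlue p = 0 := by
  rw [gradient, (hasFDerivAt_cuspGlue_of_nonpos hp).fderiv, map_zero]

theorem continuousOn_cuspDf : ContinuousOn cuspDf cuspSet := fun _ hp =>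
  (continuous_gradient_cuspGlue.continuousAt.indicator_of_frontier fun hfr =>
    gradient_cuspGlue_of_nonpos (cuspSet_inter_frontier_subset ⟨hp, hfr⟩)).continuousWithinAt

theorem hasGradientAt_cuspFun {p : ℝ²} (hp : p ∈ cuspSet) :
    HasGradientAt cuspFun (cuspDf p) p := by
  have h := (contDiff_cuspGlue.differentiable one_ne_zero p).hasFDerivAt.indicator_of_frontier
    (s := upperHalfPlane) fun hfr => by
      have hp0 : p 0 ≤ 0 := cuspSet_inter_frontier_subset ⟨hp, hfr⟩
      exact ⟨expNegInvGlue.zero_of_nonpos (by linarith),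
        (hasFDerivAt_cuspGlue_of_nonpos hp0).fderiv⟩
  rw [hasFDerivAt_iff_hasGradientAt, ← cuspFun_eq_indicator] at h
  convert h using 1
  exact congrFun (indicator_comp_of_zero (map_zero _)) p

theorem exp_le_of_lipschitzOnWith_cuspFun {C : ℝ≥0} (hC : LipschitzOnWith C cuspFun cuspSet)
    {t : ℝ} (ht0 : 0 < t) (ht1 : t ≤ 1) : Real.exp (1 / (2 * t)) ≤ 2 * C := by
  set e := Real.exp (-1 / t)
  have he0 : 0 < e := Real.exp_pos _
  have he1 : e ≤ 1 := Real.exp_le_one_iff.mpr (by rw [neg_div, neg_nonpos]; positivity)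
  have hmem : ∀ y, |y| = e → !₂[t, y] ∈ cuspSet := fun y hy =>
    show t ∈ Icc (-1) 1 ∧ y ∈ Icc (-1) 1 ∧ (t ≤ 0 ∨ (0 < t ∧ e ≤ |y|)) from
      ⟨⟨by linarith, ht1⟩, abs_le.mp (hy ▸ he1), Or.inr ⟨ht0, hy.ge⟩⟩
  have hdist : dist !₂[t, e] !₂[t, -e] = 2 * e := by
    simp [EuclideanSpace.dist_eq, Real.dist_eq, ← two_mul, Real.sqrt_sq, he0.le]
  have hfa : cuspFun !₂[t, e] = Real.exp (1 / (2 * t)) * e := by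
    rw [cuspFun, if_pos (by simp [ht0, he0])]
    change Real.exp (-1 / (2 * t)) = _
    rw [← Real.exp_add]
    congr 1
    field_simp
    ring
  have hfb : cuspFun !₂[t, -e] = 0 := if_neg (by simp [he0.le])
  have h := hC.dist_le_mul _ (hmem e (abs_of_pos he0)) _
    (hmem (-e) (by rw [abs_neg, abs_of_pos he0]))
  rw [hfa, hfb, hdist, dist_zero_right, Real.norm_eq_abs, abs_of_pos (by positivity)] at h
  exact le_of_mul_le_mul_right (h.trans_eq (by ring)) he0

theorem not_lipschitzOnWith_cuspFun : ¬ ∃ C : ℝ≥0, LipschitzOnWith C cuspFun cuspSet := by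
  rintro ⟨C, hC⟩
  have h := exp_le_of_lipschitzOnWith_cuspFun hC (t := 1 / (2 * (2 * C + 1))) (by positivity)
    ((div_le_one (by positivity)).mpr (by linarith))
  rw [show 1 / (2 * (1 / (2 * (2 * C + 1)))) = 2 * (C : ℝ) + 1 by field_simp] at h
  linarith [Real.add_one_le_exp (2 * (C : ℝ) + 1)]

def cuspSquare : Set ℝ² := EuclideanSpace.equiv (Fin 2) ℝ ⁻¹' univ.pi fun _ => Icc (-1) 1

theorem isCompact_cuspSquare : IsCompact cuspSquare :=
  (EuclideanSpace.equiv (Fin 2) ℝ).toHomeomorph.isCompact_preimage.mpr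
    (isCompact_univ_pi fun _ => isCompact_Icc)

theorem cuspSet_subset_cuspSquare : cuspSet ⊆ cuspSquare := by
  intro p hp i _
  fin_cases i
  exacts [hp.1, hp.2.1]

theorem cusp_example :
    (∃ df, ContinuousOn df cuspSet ∧ IsDerivOn cuspSet cuspFun df) ∧
    (¬ ∃ C : ℝ≥0, LipschitzOnWith C cuspFun cuspSet) ∧
    (¬ ∃ F : EuclideanSpace ℝ (Fin 2) → ℝ, ContDiff ℝ 1 F ∧ EqOn F cuspFun cuspSet) := by
  refine ⟨⟨cuspDf, continuousOn_cuspDf, isDerivOn_of_hasGradientWithinAt fun _ hp =>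
    (hasGradientAt_cuspFun hp).hasFDerivAt.hasFDerivWithinAt⟩, not_lipschitzOnWith_cuspFun, ?_⟩
  rintro ⟨F, hF, hFK⟩
  obtain ⟨C, hC⟩ := hF.locallyLipschitz.locallyLipschitzOn.exists_lipschitzOnWith_of_compact
    isCompact_cuspSquare
  refine not_lipschitzOnWith_cuspFun ⟨C, fun p hp q hq => ?_⟩
  rw [← hFK hp, ← hFK hq]
  exact hC (cuspSet_subset_cuspSquare hp) (cuspSet_subset_cuspSquare hq)
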